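/- arXiv:2209.05681 — 3 statements merged into one kernel-verified Lean document; each statement's English description precedes it below -/
import Mathlib

section
/- The special linear group SL(2, F₃) over the field with three elements (isomorphic to the binary tetrahedral group) has Jordan constant equal to 12; equivalently, its maximal abelian normal subgroup is its center, which has order 2. -/
/-- A group `G` is a *Jordan group* if there is a positive integer `d` such that every
finite subgroup `H` of `G` contains a normal abelian subgroup of index at most `d` in `H`. -/
def IsJordanGroup (G : Type*) [Group G] : Prop :=
  ∃ d : ℕ, 0 < d ∧ ∀ H : Subgroup G, Finite H →
    ∃ A : Subgroup H, A.Normal ∧ IsMulCommutative A ∧ A.index ≤ d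

/-- The *Jordan constant* of a group `G`: the least positive integer `d` such that every
finite subgroup `H` of `G` contains a normal abelian subgroup of index at most `d` in `H`. -/
noncomputable def jordanConstant (G : Type*) [Group G] : ℕ :=
  sInf {d : ℕ | 0 < d ∧ ∀ H : Subgroup G, Finite H →
    ∃ A : Subgroup H, A.Normal ∧ IsMulCommutative A ∧ A.index ≤ d}

/-!
Every element of a normal abelian subgroup of `SL(2, F₃)` commutes with all of its conjugates,
and in `SL(2, F₃)` only `±1` do, so normal abelian subgroups are central. Applied to the whole
group this forces index at least `[G : Z(G)] = 12`; conversely, in any subgroup `H` the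
intersection `H ∩ Z(G)` is normal and abelian of index at most `[G : Z(G)]`.
-/

open Subgroup

section JordanConstant

variable {G : Type*} [Group G]

theorem isJordanGroup_of_finite [Finite G] : IsJordanGroup G :=
  ⟨Nat.card G, Nat.card_pos, fun H _ =>
    ⟨⊥, inferInstance, inferInstance, by rw [index_bot]; exact H.card_le_card_group⟩⟩

theorem jordanConstant_le_index_center [(center G).FiniteIndex] :
    jordanConstant G ≤ (center G).index := by
  refine Nat.sInf_le ⟨Nat.pos_of_ne_zero FiniteIndex.index_ne_zero, fun H _ => ?_⟩
  refine ⟨(center G).subgroupOf H, inferInstance, inferInstance, ?_⟩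
  rw [← relIndex, ← relIndex_top_right]
  exact relIndex_le_of_le_right le_top <| by
    rw [relIndex_top_right]; exact FiniteIndex.index_ne_zero

theorem le_jordanConstant (hG : IsJordanGroup G) (H : Subgroup G) [Finite H] {n : ℕ}
    (hH : ∀ A : Subgroup H, A.Normal → IsMulCommutative A → n ≤ A.index) :
    n ≤ jordanConstant G := by
  obtain ⟨d, hd⟩ := hG
  refine le_csInf ⟨d, hd⟩ fun d ⟨_, hd⟩ => ?_
  obtain ⟨A, hN, hC, hA⟩ := hd H ‹_›
  exact (hH A hN hC).trans hA

theorem index_center_le_jordanConstant [Finite G]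
    (hG : ∀ A : Subgroup G, A.Normal → IsMulCommutative A → A ≤ center G) :
    (center G).index ≤ jordanConstant G := by
  refine le_jordanConstant isJordanGroup_of_finite ⊤ fun A hN hC => ?_
  let e : (⊤ : Subgroup G) ≃* G := topEquiv
  rw [← index_map_equiv A e]
  exact index_antitone (hG _ (hN.map _ e.surjective) inferInstance)

theorem le_center_of_forall_commute_conj
    (hG : ∀ a : G, (∀ g : G, Commute a (g * a * g⁻¹)) → a ∈ center G)
    {A : Subgroup G} (hN : A.Normal) (hC : IsMulCommutative A) : A ≤ center G :=
  fun a ha => hG a fun g => setLike_mul_comm ha (hN.conj_mem a ha g)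

end JordanConstant

namespace Matrix.SpecialLinearGroup

theorem card_SL_two_zmod_three : Nat.card (SpecialLinearGroup (Fin 2) (ZMod 3)) = 24 := by
  rw [Nat.card_eq_fintype_card]; decide

theorem card_center_SL_two_zmod_three :
    Nat.card (center (SpecialLinearGroup (Fin 2) (ZMod 3))) = 2 := by
  rw [Nat.card_eq_fintype_card]; decide

theorem mem_center_of_forall_commute_conj_SL_two_zmod_three :
    ∀ a : SpecialLinearGroup (Fin 2) (ZMod 3),
      (∀ g, Commute a (g * a * g⁻¹)) → a ∈ center (SpecialLinearGroup (Fin 2) (ZMod 3)) := by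
  unfold Commute SemiconjBy; decide

theorem index_center_SL_two_zmod_three :
    (center (SpecialLinearGroup (Fin 2) (ZMod 3))).index = 12 := by
  have := (center (SpecialLinearGroup (Fin 2) (ZMod 3))).index_mul_card
  rw [card_center_SL_two_zmod_three, card_SL_two_zmod_three] at this
  omega

end Matrix.SpecialLinearGroup

/-- `SL(2, F₃)` has Jordan constant `12`; equivalently, every abelian normal subgroup of
`SL(2, F₃)` is contained in its center, which has order `2`. -/
theorem stmt_5 :
    jordanConstant (Matrix.SpecialLinearGroup (Fin 2) (ZMod 3)) = 12 ∧
    (∀ A : Subgroup (Matrix.SpecialLinearGroup (Fin 2) (ZMod 3)), A.Normal → IsMulCommutative A →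
      A ≤ Subgroup.center (Matrix.SpecialLinearGroup (Fin 2) (ZMod 3))) ∧
    Nat.card (Subgroup.center (Matrix.SpecialLinearGroup (Fin 2) (ZMod 3))) = 2 := by
  open Matrix.SpecialLinearGroup in
  have hcentral := fun A ↦ le_center_of_forall_commute_conj
    mem_center_of_forall_commute_conj_SL_two_zmod_three (A := A)
  refine ⟨le_antisymm ?_ ?_, hcentral, card_center_SL_two_zmod_three⟩
  · exact index_center_SL_two_zmod_three ▸ jordanConstant_le_index_center
  · exact index_center_SL_two_zmod_three ▸ index_center_le_jordanConstant hcentral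
end

section
/- The direct product SL(2, F₃) × S₃ of the special linear group over the field with three elements and the symmetric group on 3 letters has Jordan constant equal to 24. -/
open Subgroup

section Jordan

variable {G : Type*} [Group G]

theorem exists_normal_isMulCommutative_index_le (N : Subgroup G) [N.Normal]
    [IsMulCommutative N] (hN : N.index ≠ 0) (H : Subgroup G) :
    ∃ A : Subgroup H, A.Normal ∧ IsMulCommutative A ∧ A.index ≤ N.index :=
  ⟨N.subgroupOf H, inferInstance, inferInstance,
    Nat.le_of_dvd (Nat.pos_of_ne_zero hN) (N.relIndex_dvd_index_of_normal H)⟩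

theorem isJordanGroup_of_index_ne_zero (N : Subgroup G) [N.Normal] [IsMulCommutative N]
    (hN : N.index ≠ 0) : IsJordanGroup G :=
  ⟨N.index, Nat.pos_of_ne_zero hN, fun H _ => exists_normal_isMulCommutative_index_le N hN H⟩

theorem jordanConstant_le_index (N : Subgroup G) [N.Normal] [IsMulCommutative N]
    (hN : N.index ≠ 0) : jordanConstant G ≤ N.index :=
  Nat.sInf_le ⟨Nat.pos_of_ne_zero hN, fun H _ => exists_normal_isMulCommutative_index_le N hN H⟩

theorem IsJordanGroup.exists_normal_isMulCommutative_index_le_jordanConstant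
    (hG : IsJordanGroup G) [Finite G] :
    ∃ A : Subgroup G, A.Normal ∧ IsMulCommutative A ∧ A.index ≤ jordanConstant G := by
  obtain ⟨A, hA, _, hAi⟩ := (Nat.sInf_mem hG).2 (⊤ : Subgroup G) inferInstance
  have htop : Function.Surjective (⊤ : Subgroup G).subtype := fun g => ⟨⟨g, trivial⟩, rfl⟩
  refine ⟨A.map (⊤ : Subgroup G).subtype, hA.map _ htop, inferInstance, ?_⟩
  rwa [index_map_subtype, index_top, mul_one]

instance Subgroup.prod_isMulCommutative {G' : Type*} [Group G'] (H : Subgroup G)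
    (K : Subgroup G') [IsMulCommutative H] [IsMulCommutative K] : IsMulCommutative (H.prod K) :=
  ⟨⟨fun ⟨_, ha⟩ ⟨_, hb⟩ =>
    Subtype.ext <| Prod.ext (setLike_mul_comm ha.1 hb.1) (setLike_mul_comm ha.2 hb.2)⟩⟩

def conjCommuting (G : Type*) [Group G] : Set G := {x | ∀ g : G, Commute (g * x * g⁻¹) x}

-- `Commute` is unfolded so that `decide` can evaluate membership.
instance [Fintype G] [DecidableEq G] : DecidablePred (· ∈ conjCommuting G) :=
  fun x => inferInstanceAs (Decidable (∀ g : G, g * x * g⁻¹ * x = x * (g * x * g⁻¹)))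

theorem Subgroup.coe_subset_conjCommuting (A : Subgroup G) [hA : A.Normal]
    [IsMulCommutative A] : (A : Set G) ⊆ conjCommuting G :=
  fun x hx g => setLike_mul_comm (hA.conj_mem x hx g) hx

theorem conjCommuting_prod {G' : Type*} [Group G'] :
    conjCommuting (G × G') = conjCommuting G ×ˢ conjCommuting G' := by
  ext x
  exact ⟨fun h => ⟨fun g => congrArg Prod.fst (h (g, 1)), fun g' => congrArg Prod.snd (h (1, g'))⟩,
    fun h g => Prod.ext (h.1 g.1) (h.2 g.2)⟩

theorem Subgroup.card_le_ncard_conjCommuting_mul_index [Finite G] (A : Subgroup G) [A.Normal]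
    [IsMulCommutative A] : Nat.card G ≤ (conjCommuting G).ncard * A.index := by
  rw [← A.card_mul_index, ← Nat.card_coe_set_eq]
  gcongr
  exact Set.ncard_le_ncard A.coe_subset_conjCommuting

end Jordan

section Computations

local notation "SL₂𝔽₃" => Matrix.SpecialLinearGroup (Fin 2) (ZMod 3)

theorem card_specialLinearGroup_two_zmod_three : Nat.card SL₂𝔽₃ = 24 := by
  rw [Nat.card_eq_fintype_card]
  decide

theorem card_center_specialLinearGroup_two_zmod_three : Nat.card (center SL₂𝔽₃) = 2 := by
  rw [Nat.card_eq_fintype_card]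
  decide

theorem ncard_conjCommuting_specialLinearGroup_two_zmod_three :
    (conjCommuting SL₂𝔽₃).ncard = 2 := by
  rw [← Nat.card_coe_set_eq, Nat.card_eq_fintype_card]
  decide

theorem ncard_conjCommuting_perm_fin_three : (conjCommuting (Equiv.Perm (Fin 3))).ncard = 3 := by
  rw [← Nat.card_coe_set_eq, Nat.card_eq_fintype_card]
  decide

instance : IsMulCommutative (alternatingGroup (Fin 3)) :=
  ⟨⟨by decide⟩⟩

theorem index_center_specialLinearGroup_two_zmod_three : (center SL₂𝔽₃).index = 12 := by
  have h := (center SL₂𝔽₃).card_mul_index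
  rw [card_center_specialLinearGroup_two_zmod_three, card_specialLinearGroup_two_zmod_three] at h
  omega

end Computations

/-- The direct product `SL(2, F₃) × S₃` has Jordan constant `24`. -/
theorem stmt_13 :
    jordanConstant (Matrix.SpecialLinearGroup (Fin 2) (ZMod 3) × Equiv.Perm (Fin 3)) = 24 := by
  let N := (center (Matrix.SpecialLinearGroup (Fin 2) (ZMod 3))).prod (alternatingGroup (Fin 3))
  have hN : N.index = 24 := by
    rw [index_prod, index_center_specialLinearGroup_two_zmod_three, alternatingGroup.index_eq_two]
  refine le_antisymm (hN ▸ jordanConstant_le_index N (by omega)) ?_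
  have hJ := isJordanGroup_of_index_ne_zero N (by omega)
  obtain ⟨A, _, _, hA⟩ := hJ.exists_normal_isMulCommutative_index_le_jordanConstant
  have hcard := A.card_le_ncard_conjCommuting_mul_index
  rw [Nat.card_prod, card_specialLinearGroup_two_zmod_three, Nat.card_perm, conjCommuting_prod,
    Set.ncard_prod, ncard_conjCommuting_specialLinearGroup_two_zmod_three,
    ncard_conjCommuting_perm_fin_three] at hcard
  norm_num [Nat.factorial] at hcard
  omega
end

section
/- Let B = SL(2, F₃) × SL(2, F₃) and let φ : C₂ → Aut(B) be the homomorphism sending the nonidentity element of the cyclic group C₂ of order 2 to the automorphism of B swapping the two factors. Then the semidirect product G = B ⋊_φ C₂ (of order 1152) has Jordan constant equal to 288; moreover, every abelian normal subgroup of G is contained in the center Z(B) = C₂ × C₂ of B. -/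
/-!
The image `K` of `Z(B) = {±1} × {±1}` in `G` is normal and abelian, of index `1152 / 4 = 288`,
and it is the largest abelian normal subgroup of `G`. Indeed, let `N` be abelian and normal.
An element `n ∈ N` outside `B` does not commute with its conjugate by `(1, u) ∈ B` unless
`u² = 1`, and `SL(2, F₃)` has elements of order `3`; so `N ≤ B`. The projections of `N` to
the two factors are then abelian normal subgroups of `SL(2, F₃)`, hence central.

Given a largest abelian normal subgroup `K`, every subgroup `H` contains the abelian normal
subgroup `K ⊓ H` of index at most `[G : K]`, while for `H = G` no abelian normal subgroup has
smaller index; so the Jordan constant is `[G : K]`.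
-/

open Subgroup SemidirectProduct
open scoped MatrixGroups

theorem jordanConstant_eq_index {G : Type*} [Group G] [Finite G] (K : Subgroup G) [K.Normal]
    [IsMulCommutative K] (hK : ∀ N : Subgroup G, N.Normal → IsMulCommutative N → N ≤ K) :
    jordanConstant G = K.index := by
  have hmem : K.index ∈ {d : ℕ | 0 < d ∧ ∀ H : Subgroup G, Finite H →
      ∃ A : Subgroup H, A.Normal ∧ IsMulCommutative A ∧ A.index ≤ d} := by
    refine ⟨Nat.pos_of_ne_zero FiniteIndex.index_ne_zero, fun H _ =>
      ⟨K.subgroupOf H, inferInstance, inferInstance, ?_⟩⟩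
    rw [← relIndex, ← K.relIndex_top_right]
    exact K.relIndex_le_of_le_right le_top (by simpa using FiniteIndex.index_ne_zero)
  refine le_antisymm (Nat.sInf_le hmem) (le_csInf ⟨_, hmem⟩ fun d ⟨_, hd⟩ => ?_)
  obtain ⟨A, hA, _, hAd⟩ := hd ⊤ inferInstance
  have hAK : A.map (⊤ : Subgroup G).subtype ≤ K :=
    hK _ (hA.map _ fun g => ⟨⟨g, trivial⟩, rfl⟩) inferInstance
  calc K.index ≤ (A.map (⊤ : Subgroup G).subtype).index := index_antitone hAK
    _ = A.index := by rw [index_map_subtype, index_top, mul_one]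
    _ ≤ d := hAd

theorem Subgroup.commute_conj_of_mem {G : Type*} [Group G] {N : Subgroup G} (hN : N.Normal)
    [IsMulCommutative N] {x : G} (hx : x ∈ N) (g : G) : Commute x (g * x * g⁻¹) :=
  setLike_mul_comm hx (hN.conj_mem x hx g)

namespace SemidirectProduct

section

variable {N G : Type*} [Group N] [Group G] {φ : G →* MulAut N}

instance [Finite N] [Finite G] : Finite (N ⋊[φ] G) :=
  Finite.of_equiv _ equivProd.symm

instance normal_map_inl (S : Subgroup N) [S.Characteristic] :
    (S.map (inl : N →* N ⋊[φ] G)).Normal := by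
  constructor
  rintro _ ⟨z, hz, rfl⟩ g
  obtain ⟨l, r, rfl⟩ : ∃ l r, inl l * inr r = g := ⟨_, _, inl_left_mul_inr_right g⟩
  have hrz : φ r z ∈ S := characteristic_iff_le_comap.mp ‹_› (φ r) hz
  refine ⟨l * φ r z * l⁻¹, S.normal_of_characteristic.conj_mem _ hrz l, ?_⟩
  simp only [map_mul, map_inv, inl_aut]
  group

end

section

variable {M : Type*} [Group M] {φ : Multiplicative (ZMod 2) →* MulAut (M × M)}

theorem right_eq_one_of_mem_of_prodComm (hφ : φ (Multiplicative.ofAdd 1) = MulEquiv.prodComm)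
    {N : Subgroup ((M × M) ⋊[φ] Multiplicative (ZMod 2))} (hN : N.Normal) [IsMulCommutative N]
    {u : M} (hu : u ^ 2 ≠ 1) {n : (M × M) ⋊[φ] Multiplicative (ZMod 2)} (hn : n ∈ N) :
    n.right = 1 := by
  by_contra h
  have hr : n.right = Multiplicative.ofAdd 1 := by
    revert h; generalize n.right = t; revert t; decide
  -- With `n = ((a, b), swap)`, the conjugate of `n` by `(1, u)` is `((a u⁻¹, u b), swap)`, and
  -- the first coordinates of the two products of `n` with it are `a u b` and `a u⁻¹ b`.
  have key := congrArg (fun x => x.left.1) (commute_conj_of_mem hN hn (inl (1, u))).eq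
  simp only [mul_left, hr, hφ, left_inl, right_inl, map_one, MulAut.one_apply, mul_right, one_mul,
    inv_left, inv_one, Prod.inv_mk, MulEquiv.coe_prodComm, Prod.swap_prod_mk, Prod.swap_mul,
    Prod.fst_mul, Prod.fst_swap, mul_one, inv_right] at key
  rw [mul_assoc] at key
  exact hu (by rw [sq, mul_eq_one_iff_eq_inv]; exact mul_right_cancel (mul_left_cancel key))

theorem le_map_inl_center_of_prodComm (hφ : φ (Multiplicative.ofAdd 1) = MulEquiv.prodComm)
    (hM : ∀ N : Subgroup M, N.Normal → IsMulCommutative N → N ≤ center M)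
    {u : M} (hu : u ^ 2 ≠ 1) (N : Subgroup ((M × M) ⋊[φ] Multiplicative (ZMod 2)))
    (hN : N.Normal) (_ : IsMulCommutative N) : N ≤ (center (M × M)).map inl := by
  intro n hn
  have hn_inl : inl n.left = n :=
    SemidirectProduct.ext (φ := φ) rfl (right_eq_one_of_mem_of_prodComm hφ hN hu hn).symm
  have hleft : n.left ∈ N.comap inl := by rwa [mem_comap, hn_inl]
  have : IsMulCommutative (N.comap inl) := N.comap_injective_isMulCommutative inl_injective
  refine ⟨n.left, ?_, hn_inl⟩
  rw [Subgroup.center_prod]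
  exact ⟨hM _ ((hN.comap _).map (MonoidHom.fst M M) Prod.fst_surjective) inferInstance
      ⟨_, hleft, rfl⟩,
    hM _ ((hN.comap _).map (MonoidHom.snd M M) Prod.snd_surjective) inferInstance
      ⟨_, hleft, rfl⟩⟩

end

end SemidirectProduct

theorem SL23_mem_center_of_forall_commute_conj :
    ∀ b : SL(2, ZMod 3), (∀ c, b * (c * b * c⁻¹) = c * b * c⁻¹ * b) →
      b ∈ center SL(2, ZMod 3) := by
  decide

theorem SL23_le_center_of_normal (N : Subgroup SL(2, ZMod 3)) (hN : N.Normal)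
    (_ : IsMulCommutative N) : N ≤ center SL(2, ZMod 3) :=
  fun _ hb => SL23_mem_center_of_forall_commute_conj _ (commute_conj_of_mem hN hb)

theorem SL23_card : Nat.card SL(2, ZMod 3) = 24 := by
  rw [Nat.card_eq_fintype_card]; decide

theorem SL23_card_center : Nat.card (center SL(2, ZMod 3)) = 2 := by
  rw [Nat.card_eq_fintype_card]; decide

theorem SL23_exists_sq_ne_one : ∃ u : SL(2, ZMod 3), u ^ 2 ≠ 1 :=
  ⟨⟨!![1, 1; 0, 1], by decide⟩, by decide⟩

/-- Let `B = SL(2, F₃) × SL(2, F₃)` and let `φ : C₂ → Aut B` send the nonidentity element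
to the swap of the two factors. Then `G = B ⋊[φ] C₂` has Jordan constant `288`, and every
abelian normal subgroup of `G` is contained in (the image in `G` of) the center
`Z(B) ≅ C₂ × C₂` of `B`, which has order `4`. -/
theorem stmt_14
    (φ : Multiplicative (ZMod 2) →*
      MulAut (Matrix.SpecialLinearGroup (Fin 2) (ZMod 3) ×
        Matrix.SpecialLinearGroup (Fin 2) (ZMod 3)))
    (hφ : φ (Multiplicative.ofAdd 1) = MulEquiv.prodComm) :
    jordanConstant
      ((Matrix.SpecialLinearGroup (Fin 2) (ZMod 3) ×
        Matrix.SpecialLinearGroup (Fin 2) (ZMod 3)) ⋊[φ] Multiplicative (ZMod 2)) = 288 ∧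
    Nat.card (Subgroup.center (Matrix.SpecialLinearGroup (Fin 2) (ZMod 3) ×
        Matrix.SpecialLinearGroup (Fin 2) (ZMod 3))) = 4 ∧
    ∀ N : Subgroup ((Matrix.SpecialLinearGroup (Fin 2) (ZMod 3) ×
        Matrix.SpecialLinearGroup (Fin 2) (ZMod 3)) ⋊[φ] Multiplicative (ZMod 2)),
      N.Normal → IsMulCommutative N →
      N ≤ (Subgroup.center (Matrix.SpecialLinearGroup (Fin 2) (ZMod 3) ×
        Matrix.SpecialLinearGroup (Fin 2) (ZMod 3))).map SemidirectProduct.inl := by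
  obtain ⟨u, hu⟩ := SL23_exists_sq_ne_one
  have hK := le_map_inl_center_of_prodComm hφ SL23_le_center_of_normal hu
  have hcard : Nat.card (center (SL(2, ZMod 3) × SL(2, ZMod 3))) = 4 := by
    rw [Subgroup.center_prod, Nat.card_congr (prodEquiv _ _).toEquiv, Nat.card_prod,
      SL23_card_center]
  refine ⟨?_, hcard, hK⟩
  have hindex :=
    ((center _).map (inl : _ →* (SL(2, ZMod 3) × SL(2, ZMod 3)) ⋊[φ] _)).index_mul_card
  rw [card_map_of_injective inl_injective, hcard, SemidirectProduct.card, Nat.card_prod,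
    SL23_card, Nat.card_eq_fintype_card, Fintype.card_multiplicative, ZMod.card] at hindex
  rw [jordanConstant_eq_index _ hK]
  omega
end
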